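/- arXiv:2512.15198 — 2 statements merged into one kernel-verified Lean document; each statement's English description precedes it below -/
import Mathlib

section
/- For every z with 0 ≤ z ≤ n, the number of distinct MWISP states reachable after n − z decisions is at most 2^z; that is, in bottom-up view the width of layer n + 1 − z of the (reduced) decision diagram for an MWISP instance is bounded by 2^z. (Bottom-up growth of MWISP's DD layers.) -/
/-- The MWISP dynamic-programming state after `k` decisions, for an ordering
`σ : Fin n ≃ V` of the vertices and decision vector `d : Fin n → Bool`:
`S_0 = V`, and `S_{k+1}` removes `σ k` (decision `false`) or `σ k` together
with its neighborhood (decision `true`). -/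
def mwispState {V : Type*} {n : ℕ} (G : SimpleGraph V) (σ : Fin n ≃ V)
    (d : Fin n → Bool) : ℕ → Set V
  | 0 => Set.univ
  | k + 1 =>
    if h : k < n then
      if d ⟨k, h⟩ then
        mwispState G σ d k \ ({σ ⟨k, h⟩} ∪ G.neighborSet (σ ⟨k, h⟩))
      else
        mwispState G σ d k \ {σ ⟨k, h⟩}
    else mwispState G σ d k

/-- Layer `k` of the decision diagram: the set of distinct states reachable
after `k` decisions. -/
def mwispLayer {V : Type*} {n : ℕ} (G : SimpleGraph V) (σ : Fin n ≃ V)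
    (k : ℕ) : Set (Set V) :=
  Set.range fun d : Fin n → Bool => mwispState G σ d k

lemma mwispState_mem_le {V : Type*} {n : ℕ} (G : SimpleGraph V) (σ : Fin n ≃ V)
    (d : Fin n → Bool) (k : ℕ) {v : V} (hv : v ∈ mwispState G σ d k) :
    k ≤ (σ.symm v).val ∨ n ≤ (σ.symm v).val := by
  induction k with
  | zero => left; omega
  | succ k ih =>
    unfold mwispState at hv
    by_cases h : k < n
    · simp only [dif_pos h] at hv
      have hne : v ≠ σ ⟨k, h⟩ := by
        rcases Bool.eq_false_or_eq_true (d ⟨k, h⟩) with hb | hb <;>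
          simp [hb] at hv <;> tauto
      have : (σ.symm v).val ≠ k := by
        intro hk
        apply hne
        have : σ.symm v = ⟨k, h⟩ := Fin.ext hk
        have := congrArg σ this
        simpa using this
      rcases Bool.eq_false_or_eq_true (d ⟨k, h⟩) with hb | hb <;>
        simp only [hb] at hv <;>
        rcases ih hv.1 with h1 | h1 <;> omega
    · simp only [dif_neg h] at hv
      rcases ih hv with h1 | h1 <;> right <;> omega

/-- Bottom-up growth of MWISP's DD layers: for every `z ≤ n`, the number of
distinct states reachable after `n - z` decisions is at most `2 ^ z`. -/
theorem mwispLayer_ncard_le_bottom_up {V : Type*} [Fintype V] {n : ℕ}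
    (G : SimpleGraph V) (σ : Fin n ≃ V) (z : ℕ) (hz : z ≤ n) :
    (mwispLayer G σ (n - z)).ncard ≤ 2 ^ z := by
  classical
  -- inject the layer into `Set (Fin z)`
  have hinj : ∃ f : (mwispLayer G σ (n - z)) → Set (Fin z), Function.Injective f := by
    refine ⟨fun S => {j : Fin z | σ ⟨n - z + j.val, by omega⟩ ∈ (S : Set V)}, ?_⟩
    intro S T hST
    simp only [Set.ext_iff, Set.mem_setOf_eq] at hST
    ext1
    ext v
    obtain ⟨dS, hdS⟩ := S.2
    obtain ⟨dT, hdT⟩ := T.2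
    constructor
    · intro hv
      have hle : n - z ≤ (σ.symm v).val ∨ n ≤ (σ.symm v).val := by
        rw [← hdS] at hv; exact mwispState_mem_le G σ dS _ hv
      have hlt : (σ.symm v).val < n := (σ.symm v).isLt
      have hle' : n - z ≤ (σ.symm v).val := by omega
      set j : Fin z := ⟨(σ.symm v).val - (n - z), by omega⟩ with hj
      have hvj : σ ⟨n - z + j.val, by omega⟩ = v := by
        have : (⟨n - z + j.val, by omega⟩ : Fin n) = σ.symm v := by
          apply Fin.ext; simp [hj]; omega
        rw [this]; simp
      have : j ∈ {j : Fin z | σ ⟨n - z + j.val, by omega⟩ ∈ (S : Set V)} := by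
        simpa [hvj] using hv
      simpa [hvj] using (hST j).mp (by simpa using this)
    · intro hv
      have hle : n - z ≤ (σ.symm v).val ∨ n ≤ (σ.symm v).val := by
        rw [← hdT] at hv; exact mwispState_mem_le G σ dT _ hv
      have hlt : (σ.symm v).val < n := (σ.symm v).isLt
      have hle' : n - z ≤ (σ.symm v).val := by omega
      set j : Fin z := ⟨(σ.symm v).val - (n - z), by omega⟩ with hj
      have hvj : σ ⟨n - z + j.val, by omega⟩ = v := by
        have : (⟨n - z + j.val, by omega⟩ : Fin n) = σ.symm v := by
          apply Fin.ext; simp [hj]; omega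
        rw [this]; simp
      have : j ∈ {j : Fin z | σ ⟨n - z + j.val, by omega⟩ ∈ (T : Set V)} := by
        simpa [hvj] using hv
      simpa [hvj] using (hST j).mpr (by simpa using this)
  obtain ⟨f, hf⟩ := hinj
  have h1 : (mwispLayer G σ (n - z)).ncard = Nat.card (mwispLayer G σ (n - z)) := rfl
  rw [h1]
  calc Nat.card (mwispLayer G σ (n - z)) ≤ Nat.card (Set (Fin z)) :=
        Nat.card_le_card_of_injective f hf
    _ = 2 ^ z := by simp [Nat.card_eq_fintype_card, Fintype.card_set]
end

section
/- For every k with 0 ≤ k ≤ n, the number of distinct MWISP states reachable after k decisions is at most 2^{⌊n/2⌋}; that is, the width of the largest layer of a decision diagram compiled for an MWISP instance with n vertices does not exceed 2^{⌊n/2⌋}. (Size of MWISP's DD.) -/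
/-!
A state after `k` decisions is determined by the first `k` decisions, so layer `k` has at most
`2 ^ k` states; it is also a subset of the `n - k` vertices not yet decided, so the layer has at
most `2 ^ (n - k)` states. One of `k`, `n - k` is at most `n / 2`.
-/

section

variable {V : Type*} {n : ℕ} (G : SimpleGraph V) (σ : Fin n ≃ V)

theorem mwispState_congr {d d' : Fin n → Bool} {k : ℕ}
    (h : ∀ i : Fin n, i.val < k → d i = d' i) :
    mwispState G σ d k = mwispState G σ d' k := by
  induction k with
  | zero => rfl
  | succ k ih =>
    rw [mwispState, mwispState, ih fun i hi => h i (Nat.lt_succ_of_lt hi)]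
    by_cases hkn : k < n
    · rw [dif_pos hkn, dif_pos hkn, h ⟨k, hkn⟩ (Nat.lt_succ_self k)]
    · rw [dif_neg hkn, dif_neg hkn]

theorem mwispState_succ_subset (d : Fin n → Bool) {k : ℕ} (hk : k < n) :
    mwispState G σ d (k + 1) ⊆ mwispState G σ d k \ {σ ⟨k, hk⟩} := by
  rw [mwispState, dif_pos hk]
  split_ifs
  · exact Set.sdiff_subset_sdiff_right Set.subset_union_left
  · exact subset_rfl

theorem mwispState_succ_of_le (d : Fin n → Bool) {k : ℕ} (hk : n ≤ k) :
    mwispState G σ d (k + 1) = mwispState G σ d k := by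
  rw [mwispState, dif_neg hk.not_gt]

theorem le_val_symm_of_mem_mwispState {d : Fin n → Bool} {k : ℕ} {v : V}
    (hv : v ∈ mwispState G σ d k) : k ≤ σ.symm v := by
  induction k with
  | zero => exact Nat.zero_le _
  | succ k ih =>
    by_cases hkn : k < n
    · obtain ⟨hv, hne⟩ := mwispState_succ_subset G σ d hkn hv
      have hval : (σ.symm v : ℕ) ≠ k := fun h => hne (σ.symm_apply_eq.mp (Fin.ext h))
      have := ih hv
      omega
    · rw [mwispState_succ_of_le G σ d (not_lt.mp hkn)] at hv
      have := ih hv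
      omega

theorem mwispLayer_ncard_le_two_pow {k : ℕ} (hk : k ≤ n) :
    (mwispLayer G σ k).ncard ≤ 2 ^ k := by
  set extend : (Fin k → Bool) → Fin n → Bool :=
    fun c i => if h : i.val < k then c ⟨i, h⟩ else false
  have hsub : mwispLayer G σ k ⊆ Set.range fun c => mwispState G σ (extend c) k := by
    rintro _ ⟨d, rfl⟩
    exact ⟨d ∘ Fin.castLE hk, mwispState_congr G σ fun i hi => by simp [extend, hi]⟩
  calc (mwispLayer G σ k).ncard
      ≤ (Set.range fun c => mwispState G σ (extend c) k).ncard :=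
        Set.ncard_le_ncard hsub (Set.finite_range _)
    _ ≤ (Set.univ : Set (Fin k → Bool)).ncard := by
        rw [← Set.image_univ]
        exact Set.ncard_image_le
    _ = 2 ^ k := by simp [Set.ncard_univ]

theorem ncard_setOf_le_val_symm_le (k : ℕ) :
    {v : V | k ≤ (σ.symm v : ℕ)}.ncard ≤ n - k :=
  (Set.ncard_le_ncard_of_injOn (fun v => (σ.symm v : ℕ)) (t := Set.Ico k n)
    (fun v hv => ⟨hv, (σ.symm v).isLt⟩) (Fin.val_injective.comp σ.symm.injective).injOn
    (Set.finite_Ico k n)).trans_eq (Set.ncard_Ico_nat k n)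

theorem mwispLayer_subset_powerset (k : ℕ) :
    mwispLayer G σ k ⊆ 𝒫 {v : V | k ≤ (σ.symm v : ℕ)} := by
  rintro _ ⟨d, rfl⟩ v hv
  exact le_val_symm_of_mem_mwispState G σ hv

theorem mwispLayer_ncard_le_two_pow_sub (k : ℕ) :
    (mwispLayer G σ k).ncard ≤ 2 ^ (n - k) := by
  have : Finite V := .of_equiv _ σ
  calc (mwispLayer G σ k).ncard ≤ (𝒫 {v : V | k ≤ (σ.symm v : ℕ)}).ncard :=
        Set.ncard_le_ncard (mwispLayer_subset_powerset G σ k)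
    _ = 2 ^ {v : V | k ≤ (σ.symm v : ℕ)}.ncard := Set.ncard_powerset _
    _ ≤ 2 ^ (n - k) := Nat.pow_le_pow_right two_pos (ncard_setOf_le_val_symm_le σ k)

end

theorem mwispLayer_ncard_le_max_width_general {V : Type*} {n : ℕ}
    (G : SimpleGraph V) (σ : Fin n ≃ V) (k : ℕ) :
    (mwispLayer G σ k).ncard ≤ 2 ^ (n / 2) := by
  rcases le_or_gt k (n / 2) with hk | hk
  · exact (mwispLayer_ncard_le_two_pow G σ (by omega)).trans (Nat.pow_le_pow_right two_pos hk)
  · exact (mwispLayer_ncard_le_two_pow_sub G σ k).trans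
      (Nat.pow_le_pow_right two_pos (by omega))

/-- Size of MWISP's DD: the width of every layer of a decision diagram
compiled for an MWISP instance with `n` vertices is at most `2 ^ (n / 2)`. -/
theorem mwispLayer_ncard_le_max_width {V : Type*} [Fintype V] {n : ℕ}
    (G : SimpleGraph V) (σ : Fin n ≃ V) (k : ℕ) (hk : k ≤ n) :
    (mwispLayer G σ k).ncard ≤ 2 ^ (n / 2) :=
  mwispLayer_ncard_le_max_width_general G σ k
end
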